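/- arXiv:1601.07236 — 4 statements merged into one kernel-verified Lean document; each statement's English description precedes it below -/
import Mathlib

section
/- Assume w is quasi-definite and let C ∈ ℂ^{N×N} satisfy C·w(ζ) = w(ζ)·C for all ζ ∈ 𝕋. Then C commutes with every moment μ̂(j), j ∈ ℤ; C commutes with the values P^L_{1,n}(z), P^R_{1,n}(z), P̃^L_{2,n}(z), P̃^R_{2,n}(z) for every n ≥ 0 and every z ∈ ℂ; C commutes with every Verblunsky matrix α^L_{1,n}, α^R_{1,n}, (α^L_{2,n})†, (α^R_{2,n})†; and C commutes with every quasi-tau matrix H^L_n and H^R_n. -/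
open Complex Matrix

noncomputable section

/-- Normalized matrix-valued integral over the unit circle:
`∮ f(ζ) dm(ζ) := (2π)⁻¹ ∫₀^{2π} f(e^{iθ}) dθ`, taken entrywise. -/
def circInt (N : ℕ) (f : ℂ → Matrix (Fin N) (Fin N) ℂ) : Matrix (Fin N) (Fin N) ℂ :=
  Matrix.of fun i j =>
    (2 * Real.pi)⁻¹ • ∫ θ in (0:ℝ)..(2 * Real.pi), f (Complex.exp (θ * Complex.I)) i j

/-- Evaluation at `z` of the matrix polynomial with coefficients `c 0, …, c n`. -/
def mPolyEval {N : ℕ} (c : ℕ → Matrix (Fin N) (Fin N) ℂ) (n : ℕ) (z : ℂ) :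
    Matrix (Fin N) (Fin N) ℂ :=
  ∑ k ∈ Finset.range (n + 1), z ^ k • c k

/-- Evaluation at `z` of the reciprocal polynomial `P̃(z) = ∑_{k=0}^n (c (n-k))ᴴ z^k`. -/
def mRecipEval {N : ℕ} (c : ℕ → Matrix (Fin N) (Fin N) ℂ) (n : ℕ) (z : ℂ) :
    Matrix (Fin N) (Fin N) ℂ :=
  ∑ k ∈ Finset.range (n + 1), z ^ k • (c (n - k))ᴴ

/-- The `j`-th moment `μ̂ j = ∮ w(ζ) ζ^{-j} dm(ζ)` of the matrix weight `w`. -/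
def mMoment (N : ℕ) (w : ℂ → Matrix (Fin N) (Fin N) ℂ) (j : ℤ) : Matrix (Fin N) (Fin N) ℂ :=
  circInt N fun ζ => ζ ^ (-j) • w ζ

/-- Quasi-definiteness: all the truncated block Toeplitz moment matrices
`M^L_[n]` and `M^R_[n]` are invertible. -/
def QuasiDef (N : ℕ) (w : ℂ → Matrix (Fin N) (Fin N) ℂ) : Prop :=
  ∀ n : ℕ, 1 ≤ n →
    IsUnit (Matrix.of fun p q : Fin n × Fin N =>
      mMoment N w ((p.1 : ℤ) - (q.1 : ℤ)) p.2 q.2) ∧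
    IsUnit (Matrix.of fun p q : Fin n × Fin N =>
      mMoment N w ((q.1 : ℤ) - (p.1 : ℤ)) p.2 q.2)

/-- `P n` lists the coefficients of the monic degree-`n` Szegő polynomial `P^L_{1,n}`:
monicity together with `∮ P^L_{1,n}(ζ) w(ζ) ζ^{-j} dm(ζ) = 0` for `j = 0,…,n-1`. -/
def IsSzPL1 (N : ℕ) (w : ℂ → Matrix (Fin N) (Fin N) ℂ)
    (P : ℕ → ℕ → Matrix (Fin N) (Fin N) ℂ) : Prop :=
  ∀ n : ℕ, P n n = 1 ∧ (∀ k, n < k → P n k = 0) ∧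
    ∀ j < n, circInt N (fun ζ => ζ ^ (-(j : ℤ)) • (mPolyEval (P n) n ζ * w ζ)) = 0

/-- `P n` lists the coefficients of the monic degree-`n` Szegő polynomial `P^R_{1,n}`:
monicity together with `∮ ζ^{-j} w(ζ) P^R_{1,n}(ζ) dm(ζ) = 0` for `j = 0,…,n-1`. -/
def IsSzPR1 (N : ℕ) (w : ℂ → Matrix (Fin N) (Fin N) ℂ)
    (P : ℕ → ℕ → Matrix (Fin N) (Fin N) ℂ) : Prop :=
  ∀ n : ℕ, P n n = 1 ∧ (∀ k, n < k → P n k = 0) ∧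
    ∀ j < n, circInt N (fun ζ => ζ ^ (-(j : ℤ)) • (w ζ * mPolyEval (P n) n ζ)) = 0

/-- `P n` lists the coefficients of the monic degree-`n` Szegő polynomial `P^L_{2,n}`:
monicity together with `∮ ζ^{j} w(ζ) (P^L_{2,n}(ζ))† dm(ζ) = 0` for `j = 0,…,n-1`. -/
def IsSzPL2 (N : ℕ) (w : ℂ → Matrix (Fin N) (Fin N) ℂ)
    (P : ℕ → ℕ → Matrix (Fin N) (Fin N) ℂ) : Prop :=
  ∀ n : ℕ, P n n = 1 ∧ (∀ k, n < k → P n k = 0) ∧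
    ∀ j < n, circInt N (fun ζ => ζ ^ j • (w ζ * (mPolyEval (P n) n ζ)ᴴ)) = 0

/-- `P n` lists the coefficients of the monic degree-`n` Szegő polynomial `P^R_{2,n}`:
monicity together with `∮ (P^R_{2,n}(ζ))† w(ζ) ζ^{j} dm(ζ) = 0` for `j = 0,…,n-1`. -/
def IsSzPR2 (N : ℕ) (w : ℂ → Matrix (Fin N) (Fin N) ℂ)
    (P : ℕ → ℕ → Matrix (Fin N) (Fin N) ℂ) : Prop :=
  ∀ n : ℕ, P n n = 1 ∧ (∀ k, n < k → P n k = 0) ∧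
    ∀ j < n, circInt N (fun ζ => ζ ^ j • ((mPolyEval (P n) n ζ)ᴴ * w ζ)) = 0

/-- The Verblunsky matrix of the family `P`: the value at `0` of its `n`-th member. -/
def szVer {N : ℕ} (P : ℕ → ℕ → Matrix (Fin N) (Fin N) ℂ) (n : ℕ) :
    Matrix (Fin N) (Fin N) ℂ :=
  mPolyEval (P n) n 0

/-- Quasi-tau matrix `H^L_n = ∮ P^L_{1,n}(ζ) w(ζ) ζ^{-n} dm(ζ)` (from the family `P^L_{1,·}`). -/
def szHL (N : ℕ) (w : ℂ → Matrix (Fin N) (Fin N) ℂ)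
    (P : ℕ → ℕ → Matrix (Fin N) (Fin N) ℂ) (n : ℕ) : Matrix (Fin N) (Fin N) ℂ :=
  circInt N fun ζ => ζ ^ (-(n : ℤ)) • (mPolyEval (P n) n ζ * w ζ)

/-- Quasi-tau matrix `H^R_n = ∮ ζ^{-n} w(ζ) P^R_{1,n}(ζ) dm(ζ)` (from the family `P^R_{1,·}`). -/
def szHR (N : ℕ) (w : ℂ → Matrix (Fin N) (Fin N) ℂ)
    (P : ℕ → ℕ → Matrix (Fin N) (Fin N) ℂ) (n : ℕ) : Matrix (Fin N) (Fin N) ℂ :=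
  circInt N fun ζ => ζ ^ (-(n : ℤ)) • (w ζ * mPolyEval (P n) n ζ)

/-- Cauchy transform `Q^L_{1,n}(z) = ∮ ζ^{-n} P^L_{1,n}(ζ) w(ζ) (1-ζ^{-1}z)^{-1} dm(ζ)`. -/
def szQL1 (N : ℕ) (w : ℂ → Matrix (Fin N) (Fin N) ℂ)
    (P : ℕ → ℕ → Matrix (Fin N) (Fin N) ℂ) (n : ℕ) (z : ℂ) : Matrix (Fin N) (Fin N) ℂ :=
  circInt N fun ζ => (ζ ^ (-(n : ℤ)) * (1 - ζ⁻¹ * z)⁻¹) • (mPolyEval (P n) n ζ * w ζ)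

/-- Cauchy transform `Q^R_{2,n}(z) = ∮ ζ^{-(n+1)} P̃^R_{2,n}(ζ) w(ζ) (1-ζ^{-1}z)^{-1} dm(ζ)`. -/
def szQR2 (N : ℕ) (w : ℂ → Matrix (Fin N) (Fin N) ℂ)
    (P : ℕ → ℕ → Matrix (Fin N) (Fin N) ℂ) (n : ℕ) (z : ℂ) : Matrix (Fin N) (Fin N) ℂ :=
  circInt N fun ζ => (ζ ^ (-((n : ℤ) + 1)) * (1 - ζ⁻¹ * z)⁻¹) • (mRecipEval (P n) n ζ * w ζ)

/-!
Integrating `C * w = w * C` over the circle shows that `C` commutes with every moment. The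
orthogonality relations of a monic Szegő polynomial say that its lower coefficients solve a block
Toeplitz system whose matrix and right-hand side are built from moments; the commutators
`C * P_k - P_k * C` then solve the homogeneous system, so they vanish by quasi-definiteness. The
polynomial values, Verblunsky and quasi-tau matrices are sums of products of these coefficients
and moments.
-/

section

open Finset

variable {N : ℕ}

lemma circInt_congr {f g : ℂ → Matrix (Fin N) (Fin N) ℂ} (h : ∀ ζ : ℂ, ‖ζ‖ = 1 → f ζ = g ζ) :
    circInt N f = circInt N g := by
  ext a b
  simp only [circInt, of_apply]
  congr 1
  refine intervalIntegral.integral_congr fun θ _ => ?_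
  rw [h _ (norm_exp_ofReal_mul_I θ)]

lemma circInt_mul_left (A : Matrix (Fin N) (Fin N) ℂ) {f : ℂ → Matrix (Fin N) (Fin N) ℂ}
    (hf : Continuous fun θ : ℝ => f (Complex.exp (θ * I))) :
    circInt N (fun ζ => A * f ζ) = A * circInt N f := by
  ext a b
  simp only [circInt, of_apply, mul_apply]
  rw [intervalIntegral.integral_finsetSum fun k _ =>
    ((hf.matrix_elem k b).intervalIntegrable _ _).const_mul _]
  simp only [intervalIntegral.integral_const_mul, smul_sum, mul_smul_comm]

lemma circInt_mul_right (A : Matrix (Fin N) (Fin N) ℂ) {f : ℂ → Matrix (Fin N) (Fin N) ℂ}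
    (hf : Continuous fun θ : ℝ => f (Complex.exp (θ * I))) :
    circInt N (fun ζ => f ζ * A) = circInt N f * A := by
  ext a b
  simp only [circInt, of_apply, mul_apply]
  rw [intervalIntegral.integral_finsetSum fun k _ =>
    ((hf.matrix_elem a k).intervalIntegrable _ _).mul_const _]
  simp only [intervalIntegral.integral_mul_const, smul_sum, smul_mul_assoc]

lemma circInt_finset_sum {ι : Type*} (s : Finset ι) {f : ι → ℂ → Matrix (Fin N) (Fin N) ℂ}
    (hf : ∀ i ∈ s, Continuous fun θ : ℝ => f i (Complex.exp (θ * I))) :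
    circInt N (fun ζ => ∑ i ∈ s, f i ζ) = ∑ i ∈ s, circInt N (f i) := by
  ext a b
  simp only [circInt, of_apply, Matrix.sum_apply]
  rw [intervalIntegral.integral_finsetSum fun i hi =>
    ((hf i hi).matrix_elem a b).intervalIntegrable _ _, smul_sum]

lemma continuous_zpow_smul_comp_circle {w : ℂ → Matrix (Fin N) (Fin N) ℂ} (hw : Continuous w)
    (m : ℤ) : Continuous fun θ : ℝ => Complex.exp (θ * I) ^ m • w (Complex.exp (θ * I)) := by
  have he : Continuous fun θ : ℝ => Complex.exp (θ * I) := by fun_prop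
  exact (he.zpow₀ m fun θ => Or.inl (Complex.exp_ne_zero _)).smul (hw.comp he)

lemma circInt_sum_mul_moment {ι : Type*} (s : Finset ι) {w : ℂ → Matrix (Fin N) (Fin N) ℂ}
    (hw : Continuous w) (A : ι → Matrix (Fin N) (Fin N) ℂ) (d : ι → ℤ) :
    circInt N (fun ζ => ∑ k ∈ s, A k * (ζ ^ (-d k) • w ζ)) =
      ∑ k ∈ s, A k * mMoment N w (d k) := by
  rw [circInt_finset_sum s fun k _ =>
    continuous_const.matrix_mul (continuous_zpow_smul_comp_circle hw _)]
  exact sum_congr rfl fun k _ => circInt_mul_left (A k) (continuous_zpow_smul_comp_circle hw _)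

lemma circInt_sum_moment_mul {ι : Type*} (s : Finset ι) {w : ℂ → Matrix (Fin N) (Fin N) ℂ}
    (hw : Continuous w) (A : ι → Matrix (Fin N) (Fin N) ℂ) (d : ι → ℤ) :
    circInt N (fun ζ => ∑ k ∈ s, (ζ ^ (-d k) • w ζ) * A k) =
      ∑ k ∈ s, mMoment N w (d k) * A k := by
  rw [circInt_finset_sum s fun k _ =>
    (continuous_zpow_smul_comp_circle hw _).matrix_mul continuous_const]
  exact sum_congr rfl fun k _ => circInt_mul_right (A k) (continuous_zpow_smul_comp_circle hw _)

lemma commute_mMoment {w : ℂ → Matrix (Fin N) (Fin N) ℂ} (hw : Continuous w)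
    {C : Matrix (Fin N) (Fin N) ℂ} (hC : ∀ ζ : ℂ, ‖ζ‖ = 1 → C * w ζ = w ζ * C) (j : ℤ) :
    Commute C (mMoment N w j) := by
  have hf := continuous_zpow_smul_comp_circle hw (-j)
  calc C * mMoment N w j = circInt N (fun ζ => C * (ζ ^ (-j) • w ζ)) :=
        (circInt_mul_left C hf).symm
    _ = circInt N (fun ζ => (ζ ^ (-j) • w ζ) * C) :=
        circInt_congr fun ζ hζ => by rw [mul_smul_comm, smul_mul_assoc, hC ζ hζ]
    _ = mMoment N w j * C := circInt_mul_right C hf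

lemma conjTranspose_mPolyEval {ζ : ℂ} (hζ : ‖ζ‖ = 1) (c : ℕ → Matrix (Fin N) (Fin N) ℂ)
    (n : ℕ) : (mPolyEval c n ζ)ᴴ = ∑ k ∈ range (n + 1), ζ ^ (-(k : ℤ)) • (c k)ᴴ := by
  have hstar : star ζ = ζ⁻¹ := (Complex.inv_eq_conj hζ).symm
  simp only [mPolyEval, conjTranspose_sum, conjTranspose_smul, star_pow, hstar, _root_.zpow_neg,
    zpow_natCast, inv_pow]

lemma circInt_zpow_smul_mPolyEval_mul {w : ℂ → Matrix (Fin N) (Fin N) ℂ} (hw : Continuous w)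
    (c : ℕ → Matrix (Fin N) (Fin N) ℂ) (n : ℕ) (j : ℤ) :
    circInt N (fun ζ => ζ ^ (-j) • (mPolyEval c n ζ * w ζ)) =
      ∑ k ∈ range (n + 1), c k * mMoment N w (j - k) := by
  rw [← circInt_sum_mul_moment _ hw]
  refine circInt_congr fun ζ hζ => ?_
  have hζ0 : ζ ≠ 0 := norm_ne_zero_iff.mp (hζ ▸ one_ne_zero)
  rw [mPolyEval, sum_mul, smul_sum]
  refine sum_congr rfl fun k _ => ?_
  rw [smul_mul_assoc, smul_smul, mul_smul_comm, ← zpow_natCast, ← zpow_add₀ hζ0]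
  congr 2
  ring

lemma circInt_zpow_smul_mul_mPolyEval {w : ℂ → Matrix (Fin N) (Fin N) ℂ} (hw : Continuous w)
    (c : ℕ → Matrix (Fin N) (Fin N) ℂ) (n : ℕ) (j : ℤ) :
    circInt N (fun ζ => ζ ^ (-j) • (w ζ * mPolyEval c n ζ)) =
      ∑ k ∈ range (n + 1), mMoment N w (j - k) * c k := by
  rw [← circInt_sum_moment_mul _ hw]
  refine circInt_congr fun ζ hζ => ?_
  have hζ0 : ζ ≠ 0 := norm_ne_zero_iff.mp (hζ ▸ one_ne_zero)
  rw [mPolyEval, mul_sum, smul_sum]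
  refine sum_congr rfl fun k _ => ?_
  rw [mul_smul_comm, smul_smul, smul_mul_assoc, ← zpow_natCast, ← zpow_add₀ hζ0]
  congr 2
  ring

lemma circInt_pow_smul_mul_conjTranspose_mPolyEval {w : ℂ → Matrix (Fin N) (Fin N) ℂ}
    (hw : Continuous w) (c : ℕ → Matrix (Fin N) (Fin N) ℂ) (n j : ℕ) :
    circInt N (fun ζ => ζ ^ j • (w ζ * (mPolyEval c n ζ)ᴴ)) =
      ∑ k ∈ range (n + 1), mMoment N w (k - j) * (c k)ᴴ := by
  rw [← circInt_sum_moment_mul _ hw]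
  refine circInt_congr fun ζ hζ => ?_
  have hζ0 : ζ ≠ 0 := norm_ne_zero_iff.mp (hζ ▸ one_ne_zero)
  rw [conjTranspose_mPolyEval hζ, mul_sum, smul_sum]
  refine sum_congr rfl fun k _ => ?_
  rw [mul_smul_comm, smul_smul, smul_mul_assoc, ← zpow_natCast, ← zpow_add₀ hζ0]
  congr 2
  ring

lemma circInt_pow_smul_conjTranspose_mPolyEval_mul {w : ℂ → Matrix (Fin N) (Fin N) ℂ}
    (hw : Continuous w) (c : ℕ → Matrix (Fin N) (Fin N) ℂ) (n j : ℕ) :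
    circInt N (fun ζ => ζ ^ j • ((mPolyEval c n ζ)ᴴ * w ζ)) =
      ∑ k ∈ range (n + 1), (c k)ᴴ * mMoment N w (k - j) := by
  rw [← circInt_sum_mul_moment _ hw]
  refine circInt_congr fun ζ hζ => ?_
  have hζ0 : ζ ≠ 0 := norm_ne_zero_iff.mp (hζ ▸ one_ne_zero)
  rw [conjTranspose_mPolyEval hζ, sum_mul, smul_sum]
  refine sum_congr rfl fun k _ => ?_
  rw [smul_mul_assoc, smul_smul, mul_smul_comm, ← zpow_natCast, ← zpow_add₀ hζ0]
  congr 2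
  ring

theorem Matrix.commute_of_vecMul_eq {m R : Type*} [Fintype m] [DecidableEq m] [Ring R]
    {M : Matrix m m R} (hM : IsUnit M) {c : R} (hcM : ∀ i j, Commute c (M i j))
    {v b : m → R} (hv : v ᵥ* M = b) (hb : ∀ j, Commute c (b j)) (i : m) :
    Commute c (v i) := by
  set D : m → R := fun i => c * v i - v i * c
  have hD : D ᵥ* M = 0 := by
    ext j
    have hDj : (D ᵥ* M) j = c * b j - b j * c := by
      simp only [D, ← hv, vecMul, dotProduct, sub_mul, sum_sub_distrib, mul_sum, sum_mul,
        mul_assoc, fun i => (hcM i j).eq]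
    rw [hDj, (hb j).eq, sub_self, Pi.zero_apply]
  obtain ⟨M', hM'⟩ := hM.exists_right_inv
  have hD0 : D = 0 := by rw [← vecMul_one D, ← hM', ← vecMul_vecMul, hD, zero_vecMul]
  exact sub_eq_zero.mp (congrFun hD0 i)

theorem Matrix.commute_of_mulVec_eq {m R : Type*} [Fintype m] [DecidableEq m] [Ring R]
    {M : Matrix m m R} (hM : IsUnit M) {c : R} (hcM : ∀ i j, Commute c (M i j))
    {v b : m → R} (hv : M *ᵥ v = b) (hb : ∀ j, Commute c (b j)) (i : m) :
    Commute c (v i) := by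
  set D : m → R := fun i => c * v i - v i * c
  have hD : M *ᵥ D = 0 := by
    ext j
    have hDj : (M *ᵥ D) j = c * b j - b j * c := by
      simp only [D, ← hv, mulVec, dotProduct, mul_sub, sum_sub_distrib, mul_sum, sum_mul,
        ← mul_assoc, fun k => (hcM j k).eq]
    rw [hDj, (hb j).eq, sub_self, Pi.zero_apply]
  obtain ⟨M', hM'⟩ := hM.exists_left_inv
  have hD0 : D = 0 := by rw [← one_mulVec D, ← hM', ← mulVec_mulVec, hD, mulVec_zero]
  exact sub_eq_zero.mp (congrFun hD0 i)

section System

variable {R : Type*} [Ring R] {c : R} {n : ℕ} {g : ℕ → ℕ → R} {A : ℕ → R}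

lemma commute_of_left_system (hg : ∀ j k, Commute c (g j k))
    (hT : IsUnit (of fun i j : Fin n => g j i)) (hAn : Commute c (A n))
    (hsys : ∀ j < n, ∑ k ∈ range (n + 1), A k * g j k = 0) {k : ℕ} (hk : k < n) :
    Commute c (A k) := by
  refine commute_of_vecMul_eq hT (fun _ _ => hg _ _) (v := fun i : Fin n => A i)
    (b := fun j => -(A n * g j n)) ?_ (fun j => (hAn.mul_right (hg _ _)).neg_right) ⟨k, hk⟩
  ext j
  have h := hsys j j.isLt
  rw [sum_range_succ, ← Fin.sum_univ_eq_sum_range (fun i => A i * g j i)] at h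
  exact eq_neg_of_add_eq_zero_left h

lemma commute_of_right_system (hg : ∀ j k, Commute c (g j k))
    (hT : IsUnit (of fun i j : Fin n => g i j)) (hAn : Commute c (A n))
    (hsys : ∀ j < n, ∑ k ∈ range (n + 1), g j k * A k = 0) {k : ℕ} (hk : k < n) :
    Commute c (A k) := by
  refine commute_of_mulVec_eq hT (fun _ _ => hg _ _) (v := fun i : Fin n => A i)
    (b := fun j => -(g j n * A n)) ?_ (fun j => ((hg _ _).mul_right hAn).neg_right) ⟨k, hk⟩
  ext j
  have h := hsys j j.isLt
  rw [sum_range_succ, ← Fin.sum_univ_eq_sum_range (fun i => g j i * A i)] at h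
  exact eq_neg_of_add_eq_zero_left h

end System

lemma commute_of_monic {R : Type*} [Semiring R] {c : R} {n : ℕ} {A : ℕ → R} (hn : A n = 1)
    (hdeg : ∀ k, n < k → A k = 0) (hlow : ∀ k < n, Commute c (A k)) (k : ℕ) :
    Commute c (A k) := by
  rcases lt_trichotomy k n with hk | rfl | hk
  · exact hlow k hk
  · exact hn ▸ Commute.one_right c
  · exact hdeg k hk ▸ Commute.zero_right c

section Szego

variable {w : ℂ → Matrix (Fin N) (Fin N) ℂ} {P : ℕ → ℕ → Matrix (Fin N) (Fin N) ℂ}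
  {C : Matrix (Fin N) (Fin N) ℂ}

/- `QuasiDef` is about the flattened `nN × nN` matrix; `compRingEquiv` regroups it into an
`n × n` matrix of `N × N` blocks. -/
lemma QuasiDef.isUnit_toeplitz_left (hqd : QuasiDef N w) (n : ℕ) :
    IsUnit (of fun i j : Fin n => mMoment N w (i - j)) := by
  rcases Nat.eq_zero_or_pos n with rfl | hn
  · exact isUnit_of_subsingleton _
  · exact (hqd n hn).1.map (compRingEquiv (Fin n) (Fin N) ℂ).symm

lemma QuasiDef.isUnit_toeplitz_right (hqd : QuasiDef N w) (n : ℕ) :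
    IsUnit (of fun i j : Fin n => mMoment N w (j - i)) := by
  rcases Nat.eq_zero_or_pos n with rfl | hn
  · exact isUnit_of_subsingleton _
  · exact (hqd n hn).2.map (compRingEquiv (Fin n) (Fin N) ℂ).symm

lemma IsSzPL1.commute_coeff (hP : IsSzPL1 N w P) (hw : Continuous w) (hqd : QuasiDef N w)
    (hμ : ∀ j, Commute C (mMoment N w j)) (n k : ℕ) : Commute C (P n k) := by
  obtain ⟨hmonic, hdeg, horth⟩ := hP n
  refine commute_of_monic hmonic hdeg (fun k hk => ?_) k
  refine commute_of_left_system (fun j k => hμ (j - k)) (hqd.isUnit_toeplitz_right n)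
    (hmonic ▸ Commute.one_right C) (fun j hj => ?_) hk
  rw [← circInt_zpow_smul_mPolyEval_mul hw]
  exact horth j hj

lemma IsSzPR1.commute_coeff (hP : IsSzPR1 N w P) (hw : Continuous w) (hqd : QuasiDef N w)
    (hμ : ∀ j, Commute C (mMoment N w j)) (n k : ℕ) : Commute C (P n k) := by
  obtain ⟨hmonic, hdeg, horth⟩ := hP n
  refine commute_of_monic hmonic hdeg (fun k hk => ?_) k
  refine commute_of_right_system (fun j k => hμ (j - k)) (hqd.isUnit_toeplitz_left n)
    (hmonic ▸ Commute.one_right C) (fun j hj => ?_) hk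
  rw [← circInt_zpow_smul_mul_mPolyEval hw]
  exact horth j hj

lemma IsSzPL2.commute_conjTranspose_coeff (hP : IsSzPL2 N w P) (hw : Continuous w)
    (hqd : QuasiDef N w) (hμ : ∀ j, Commute C (mMoment N w j)) (n k : ℕ) :
    Commute C (P n k)ᴴ := by
  obtain ⟨hmonic, hdeg, horth⟩ := hP n
  have hmonic' : (P n n)ᴴ = 1 := by rw [hmonic, conjTranspose_one]
  refine commute_of_monic (A := fun k => (P n k)ᴴ) hmonic'
    (fun k hk => by rw [hdeg k hk, conjTranspose_zero]) (fun k hk => ?_) k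
  refine commute_of_right_system (A := fun k => (P n k)ᴴ) (fun j k => hμ (k - j))
    (hqd.isUnit_toeplitz_right n) (hmonic' ▸ Commute.one_right C) (fun j hj => ?_) hk
  rw [← circInt_pow_smul_mul_conjTranspose_mPolyEval hw]
  exact horth j hj

lemma IsSzPR2.commute_conjTranspose_coeff (hP : IsSzPR2 N w P) (hw : Continuous w)
    (hqd : QuasiDef N w) (hμ : ∀ j, Commute C (mMoment N w j)) (n k : ℕ) :
    Commute C (P n k)ᴴ := by
  obtain ⟨hmonic, hdeg, horth⟩ := hP n
  have hmonic' : (P n n)ᴴ = 1 := by rw [hmonic, conjTranspose_one]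
  refine commute_of_monic (A := fun k => (P n k)ᴴ) hmonic'
    (fun k hk => by rw [hdeg k hk, conjTranspose_zero]) (fun k hk => ?_) k
  refine commute_of_left_system (A := fun k => (P n k)ᴴ) (fun j k => hμ (k - j))
    (hqd.isUnit_toeplitz_left n) (hmonic' ▸ Commute.one_right C) (fun j hj => ?_) hk
  rw [← circInt_pow_smul_conjTranspose_mPolyEval_mul hw]
  exact horth j hj

end Szego

lemma commute_mPolyEval {C : Matrix (Fin N) (Fin N) ℂ} {c : ℕ → Matrix (Fin N) (Fin N) ℂ}
    (h : ∀ k, Commute C (c k)) (n : ℕ) (z : ℂ) : Commute C (mPolyEval c n z) :=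
  Commute.sum_right _ _ _ fun k _ => (h k).smul_right _

lemma commute_mRecipEval {C : Matrix (Fin N) (Fin N) ℂ} {c : ℕ → Matrix (Fin N) (Fin N) ℂ}
    (h : ∀ k, Commute C (c k)ᴴ) (n : ℕ) (z : ℂ) : Commute C (mRecipEval c n z) :=
  Commute.sum_right _ _ _ fun k _ => (h (n - k)).smul_right _

lemma mPolyEval_zero (c : ℕ → Matrix (Fin N) (Fin N) ℂ) (n : ℕ) : mPolyEval c n 0 = c 0 := by
  simp [mPolyEval, sum_range_succ']

end

theorem statement4_general {N : ℕ} (w : ℂ → Matrix (Fin N) (Fin N) ℂ)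
    (hw : Continuous w) (hqd : QuasiDef N w)
    (PL1 PR1 PL2 PR2 : ℕ → ℕ → Matrix (Fin N) (Fin N) ℂ)
    (hPL1 : IsSzPL1 N w PL1) (hPR1 : IsSzPR1 N w PR1)
    (hPL2 : IsSzPL2 N w PL2) (hPR2 : IsSzPR2 N w PR2)
    (C : Matrix (Fin N) (Fin N) ℂ)
    (hC : ∀ ζ : ℂ, ‖ζ‖ = 1 → C * w ζ = w ζ * C) :
    (∀ j : ℤ, C * mMoment N w j = mMoment N w j * C) ∧
    (∀ n : ℕ, ∀ z : ℂ,
      C * mPolyEval (PL1 n) n z = mPolyEval (PL1 n) n z * C ∧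
      C * mPolyEval (PR1 n) n z = mPolyEval (PR1 n) n z * C ∧
      C * mRecipEval (PL2 n) n z = mRecipEval (PL2 n) n z * C ∧
      C * mRecipEval (PR2 n) n z = mRecipEval (PR2 n) n z * C) ∧
    (∀ n : ℕ,
      C * szVer PL1 n = szVer PL1 n * C ∧
      C * szVer PR1 n = szVer PR1 n * C ∧
      C * (szVer PL2 n)ᴴ = (szVer PL2 n)ᴴ * C ∧
      C * (szVer PR2 n)ᴴ = (szVer PR2 n)ᴴ * C) ∧
    (∀ n : ℕ,
      C * szHL N w PL1 n = szHL N w PL1 n * C ∧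
      C * szHR N w PR1 n = szHR N w PR1 n * C) := by
  have hμ := commute_mMoment hw hC
  have hL1 := hPL1.commute_coeff hw hqd hμ
  have hR1 := hPR1.commute_coeff hw hqd hμ
  have hL2 := hPL2.commute_conjTranspose_coeff hw hqd hμ
  have hR2 := hPR2.commute_conjTranspose_coeff hw hqd hμ
  refine ⟨hμ, fun n z => ?_, fun n => ?_, fun n => ⟨?_, ?_⟩⟩
  · exact ⟨commute_mPolyEval (hL1 n) n z, commute_mPolyEval (hR1 n) n z,
      commute_mRecipEval (hL2 n) n z, commute_mRecipEval (hR2 n) n z⟩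
  · simp only [szVer, mPolyEval_zero]
    exact ⟨hL1 n 0, hR1 n 0, hL2 n 0, hR2 n 0⟩
  · rw [szHL, circInt_zpow_smul_mPolyEval_mul hw]
    exact Commute.sum_right _ _ _ fun k _ => (hL1 n k).mul_right (hμ _)
  · rw [szHR, circInt_zpow_smul_mul_mPolyEval hw]
    exact Commute.sum_right _ _ _ fun k _ => (hμ _).mul_right (hR1 n k)

/-- a constant matrix commuting with the weight commutes with all moments,
Szegő polynomials, reciprocal polynomials, Verblunsky matrices and quasi-tau matrices. -/
theorem statement4 {N : ℕ} (hN : 1 ≤ N) (w : ℂ → Matrix (Fin N) (Fin N) ℂ)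
    (hw : Continuous w) (hqd : QuasiDef N w)
    (PL1 PR1 PL2 PR2 : ℕ → ℕ → Matrix (Fin N) (Fin N) ℂ)
    (hPL1 : IsSzPL1 N w PL1) (hPR1 : IsSzPR1 N w PR1)
    (hPL2 : IsSzPL2 N w PL2) (hPR2 : IsSzPR2 N w PR2)
    (C : Matrix (Fin N) (Fin N) ℂ)
    (hC : ∀ ζ : ℂ, ‖ζ‖ = 1 → C * w ζ = w ζ * C) :
    (∀ j : ℤ, C * mMoment N w j = mMoment N w j * C) ∧
    (∀ n : ℕ, ∀ z : ℂ,
      C * mPolyEval (PL1 n) n z = mPolyEval (PL1 n) n z * C ∧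
      C * mPolyEval (PR1 n) n z = mPolyEval (PR1 n) n z * C ∧
      C * mRecipEval (PL2 n) n z = mRecipEval (PL2 n) n z * C ∧
      C * mRecipEval (PR2 n) n z = mRecipEval (PR2 n) n z * C) ∧
    (∀ n : ℕ,
      C * szVer PL1 n = szVer PL1 n * C ∧
      C * szVer PR1 n = szVer PR1 n * C ∧
      C * (szVer PL2 n)ᴴ = (szVer PL2 n)ᴴ * C ∧
      C * (szVer PR2 n)ᴴ = (szVer PR2 n)ᴴ * C) ∧
    (∀ n : ℕ,
      C * szHL N w PL1 n = szHL N w PL1 n * C ∧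
      C * szHR N w PR1 n = szHR N w PR1 n * C) :=
  statement4_general w hw hqd PL1 PR1 PL2 PR2 hPL1 hPR1 hPL2 hPR2 C hC
end
end

section
/- Let α, β, H, H', K, K', W ∈ ℂ^{N×N} with H, H', K, K' invertible, H'·H^{−1} = I − β·α, and K·(K')^{−1} = I − α·β. Suppose the N×N matrices A, B, C, D satisfy the linear system: A·α − B·H^{−1} = α·W, C·α − D·H^{−1} = −H^{−1}·W, A·K + B·H^{−1}·β·K' = 0, and C·K + D·H^{−1}·β·K' = 0. Then A = α·W·β, B = −α·W·H', C = −H^{−1}·W·β, and D = H^{−1}·W·H'; equivalently the 2N×2N block matrix [[A,B],[C,D]] equals the dyadic product of the column [α; −H^{−1}] with W and the row [β, −H']. -/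
/-!
Eliminating `X` from the row system `X α - Y H⁻¹ = S`, `X K + Y H⁻¹ β K' = 0` rests on the
push-through identity `(1 - β α) β = β (1 - α β)`: in terms of `H, H', K, K'` it reads
`H⁻¹ β K' = H'⁻¹ β K`, so the second equation gives `X = -Y H'⁻¹ β`, and then the first collapses
to `S = -Y H'⁻¹ (β α + H' H⁻¹) = -Y H'⁻¹`. Applying this to the rows `(A, B)` and `(C, D)` gives
the dyadic form.
-/

namespace Matrix

variable {n R : Type*} [Fintype n] [DecidableEq n] [CommRing R]

theorem inv_mul_mul_eq_inv_mul_mul_of_mul_inv_eq {α β H H' K K' : Matrix n n R}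
    (hH' : IsUnit H') (hK' : IsUnit K')
    (hHH : H' * H⁻¹ = 1 - β * α) (hKK : K * K'⁻¹ = 1 - α * β) :
    H⁻¹ * β * K' = H'⁻¹ * β * K := by
  have hH'd := (isUnit_iff_isUnit_det H').mp hH'
  have hK'd := (isUnit_iff_isUnit_det K').mp hK'
  have push : H' * (H⁻¹ * β * K') = β * K := by
    calc H' * (H⁻¹ * β * K') = (1 - β * α) * β * K' := by rw [← hHH]; noncomm_ring
      _ = β * (K * K'⁻¹) * K' := by rw [hKK]; noncomm_ring
      _ = β * K := by rw [mul_assoc, nonsing_inv_mul_cancel_right _ _ hK'd]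
  rw [mul_assoc H'⁻¹, ← push, ← mul_assoc, nonsing_inv_mul _ hH'd, one_mul]

theorem eq_mul_and_eq_neg_mul_of_linear_system {α β H H' K K' X Y S : Matrix n n R}
    (hH' : IsUnit H') (hK : IsUnit K) (hK' : IsUnit K')
    (hHH : H' * H⁻¹ = 1 - β * α) (hKK : K * K'⁻¹ = 1 - α * β)
    (h₁ : X * α - Y * H⁻¹ = S) (h₂ : X * K + Y * H⁻¹ * β * K' = 0) :
    X = S * β ∧ Y = -(S * H') := by
  have hH'd := (isUnit_iff_isUnit_det H').mp hH'
  have hX : X = -(Y * H'⁻¹ * β) := by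
    have hXK : (X + Y * H'⁻¹ * β) * K = 0 := by
      calc (X + Y * H'⁻¹ * β) * K = X * K + Y * (H'⁻¹ * β * K) := by noncomm_ring
        _ = X * K + Y * H⁻¹ * β * K' := by
          rw [← inv_mul_mul_eq_inv_mul_mul_of_mul_inv_eq hH' hK' hHH hKK]; noncomm_ring
        _ = 0 := h₂
    exact eq_neg_of_add_eq_zero_left ((IsUnit.mul_left_eq_zero hK).mp hXK)
  have hS : S = -(Y * H'⁻¹) := by
    calc S = -(Y * H'⁻¹ * β) * α - Y * (H'⁻¹ * H') * H⁻¹ := by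
          rw [← h₁, hX, nonsing_inv_mul _ hH'd, mul_one]
      _ = -(Y * H'⁻¹ * (β * α + H' * H⁻¹)) := by noncomm_ring
      _ = -(Y * H'⁻¹) := by rw [hHH, add_sub_cancel, mul_one]
  refine ⟨by rw [hX, hS, neg_mul], ?_⟩
  rw [hS, neg_mul, neg_neg, nonsing_inv_mul_cancel_right _ _ hH'd]

end Matrix

open Matrix in
theorem statement10_general {N : ℕ}
    (α β H H' K K' W A B C D : Matrix (Fin N) (Fin N) ℂ)
    (hH' : IsUnit H') (hK : IsUnit K) (hK' : IsUnit K')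
    (hHH : H' * H⁻¹ = 1 - β * α) (hKK : K * K'⁻¹ = 1 - α * β)
    (e1 : A * α - B * H⁻¹ = α * W)
    (e2 : C * α - D * H⁻¹ = -(H⁻¹ * W))
    (e3 : A * K + B * H⁻¹ * β * K' = 0)
    (e4 : C * K + D * H⁻¹ * β * K' = 0) :
    A = α * W * β ∧ B = -(α * W * H') ∧ C = -(H⁻¹ * W * β) ∧ D = H⁻¹ * W * H' := by
  obtain ⟨hA, hB⟩ := eq_mul_and_eq_neg_mul_of_linear_system hH' hK hK' hHH hKK e1 e3
  obtain ⟨hC, hD⟩ := eq_mul_and_eq_neg_mul_of_linear_system hH' hK hK' hHH hKK e2 e4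
  exact ⟨hA, hB, by rw [hC, neg_mul], by rw [hD, neg_mul, neg_neg]⟩

/-- the linear-algebra core of the computation of the leading Laurent
coefficient `M^{[0]}_n`: the unique solution of the linear system is the dyadic product. -/
theorem statement10 {N : ℕ} (hN : 1 ≤ N)
    (α β H H' K K' W A B C D : Matrix (Fin N) (Fin N) ℂ)
    (hH : IsUnit H) (hH' : IsUnit H') (hK : IsUnit K) (hK' : IsUnit K')
    (hHH : H' * H⁻¹ = 1 - β * α) (hKK : K * K'⁻¹ = 1 - α * β)
    (e1 : A * α - B * H⁻¹ = α * W)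
    (e2 : C * α - D * H⁻¹ = -(H⁻¹ * W))
    (e3 : A * K + B * H⁻¹ * β * K' = 0)
    (e4 : C * K + D * H⁻¹ * β * K' = 0) :
    A = α * W * β ∧ B = -(α * W * H') ∧ C = -(H⁻¹ * W * β) ∧ D = H⁻¹ * W * H' :=
  statement10_general α β H H' K K' W A B C D hH' hK hK' hHH hKK e1 e2 e3 e4
end

section
/- Let W_{−2}, W_{−1} ∈ ℂ^{N×N} with W_{−2} invertible and W_{−1} + nI invertible for every integer n ≥ 1, and let (α_n)_{n≥1}, (β_n)_{n≥1} be sequences of N×N complex matrices satisfying, for all n ≥ 1, (W_{−1} + (n+1)I)·α_{n+1} = α_n·W_{−2} and β_n·(W_{−1} + nI) = W_{−2}·β_{n+1}. Then: (i) α_n = (W_{−1} + nI)^{−1}···(W_{−1} + 2I)^{−1}·α_1·W_{−2}^{n−1} and β_n = W_{−2}^{−(n−1)}·β_1·(W_{−1} + I)·(W_{−1} + 2I)···(W_{−1} + (n−1)I) for all n ≥ 1; (ii) for all n ≥ 2 the remaining equations of the system hold identically: −α_n·β_{n−1} + [α_n·β_{n−1}, W_{−1}] = α_n·W_{−2}·β_n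 − α_{n−1}·W_{−2}·β_{n−1}, and β_{n−1}·α_n = −W_{−2}·β_n·α_n + β_{n−1}·α_{n−1}·W_{−2}; here [A,B] := AB − BA. -/
open Complex Matrix

noncomputable section

/-
The two hypothesised recursions are first-order and solvable for the later term, so they
unroll to the product formulas (i). In each equation of (ii), substituting
`α (n-1) W₋₂ = (W₋₁ + n) α n` and `W₋₂ β n = β (n-1) (W₋₁ + n - 1)` leaves a linear
expression in `α n β (n-1)` (resp. `β (n-1) α n`) that cancels identically.
-/

section Unrolling

variable {M : Type*} [Monoid M]

theorem eq_prod_map_range_mul_mul_pow_of_succ {a c : ℕ → M} {w : M}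
    (h : ∀ n, 1 ≤ n → a (n + 1) = c (n + 1) * a n * w) (m : ℕ) :
    a (m + 1) = ((List.range m).map fun k => c (m + 1 - k)).prod * a 1 * w ^ m := by
  induction m with
  | zero => simp
  | succ m ih =>
    have hc : (fun k => c (m + 1 + 1 - (k + 1))) = fun k => c (m + 1 - k) := by
      funext k
      rw [Nat.add_sub_add_right]
    rw [h (m + 1) (by omega), ih, List.range_succ_eq_map, List.map_cons, List.map_map,
      Function.comp_def, hc, List.prod_cons, pow_succ]
    simp only [Nat.sub_zero, mul_assoc]

theorem eq_pow_mul_mul_prod_map_range_of_succ {b d : ℕ → M} {v : M}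
    (h : ∀ n, 1 ≤ n → b (n + 1) = v * b n * d n) (m : ℕ) :
    b (m + 1) = v ^ m * b 1 * ((List.range m).map fun k => d (k + 1)).prod := by
  induction m with
  | zero => simp
  | succ m ih =>
    rw [h (m + 1) (by omega), ih, List.range_succ, List.map_append, List.prod_append, pow_succ']
    simp only [List.map_cons, List.map_nil, List.prod_cons, List.prod_nil, mul_one, mul_assoc]

end Unrolling

section Compatibility

variable {K A : Type*} [CommRing K] [Ring A] [Algebra K A]

theorem neg_add_commutator_eq_of_shift {W₁ W₂ a a' b b' : A} {t : K}
    (ha : (W₁ + (t + 1) • 1) * a' = a * W₂) (hb : b * (W₁ + t • 1) = W₂ * b') :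
    -(a' * b) + (a' * b * W₁ - W₁ * (a' * b)) = a' * W₂ * b' - a * W₂ * b := by
  rw [mul_assoc a' W₂ b', ← hb, ← ha]
  simp only [mul_add, add_mul, mul_smul_comm, smul_mul_assoc, mul_one, one_mul, ← mul_assoc]
  module

theorem mul_eq_neg_add_of_shift {W₁ W₂ a a' b b' : A} {t : K}
    (ha : (W₁ + (t + 1) • 1) * a' = a * W₂) (hb : b * (W₁ + t • 1) = W₂ * b') :
    b * a' = -(W₂ * b' * a') + b * a * W₂ := by
  rw [← hb, mul_assoc b a, ← ha]
  simp only [mul_add, add_mul, mul_smul_comm, smul_mul_assoc, mul_one, one_mul, ← mul_assoc]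
  module

end Compatibility

theorem statement16_general {N : ℕ}
    (Wm2 Wm1 : Matrix (Fin N) (Fin N) ℂ)
    (hWm2 : IsUnit Wm2)
    (hWm1 : ∀ n : ℕ, 1 ≤ n → IsUnit (Wm1 + (n : ℂ) • 1))
    (α β : ℕ → Matrix (Fin N) (Fin N) ℂ)
    (hα : ∀ n : ℕ, 1 ≤ n → (Wm1 + ((n : ℂ) + 1) • 1) * α (n+1) = α n * Wm2)
    (hβ : ∀ n : ℕ, 1 ≤ n → β n * (Wm1 + (n : ℂ) • 1) = Wm2 * β (n+1)) :
    (∀ n : ℕ, 1 ≤ n →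
      α n = ((List.range (n-1)).map fun k => (Wm1 + ((n : ℂ) - (k : ℂ)) • 1)⁻¹).prod *
          α 1 * Wm2 ^ (n-1) ∧
      β n = Wm2⁻¹ ^ (n-1) * β 1 *
          ((List.range (n-1)).map fun k => Wm1 + ((k : ℂ) + 1) • 1).prod) ∧
    (∀ n : ℕ, 2 ≤ n →
      -(α n * β (n-1)) + ((α n * β (n-1)) * Wm1 - Wm1 * (α n * β (n-1))) =
        α n * Wm2 * β n - α (n-1) * Wm2 * β (n-1) ∧
      β (n-1) * α n = -(Wm2 * β n * α n) + β (n-1) * α (n-1) * Wm2) := by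
  have hα' : ∀ n, 1 ≤ n → α (n + 1) = (Wm1 + ((n + 1 : ℕ) : ℂ) • 1)⁻¹ * α n * Wm2 := by
    intro n hn
    have hdet := (isUnit_iff_isUnit_det _).mp (hWm1 (n + 1) (by omega))
    rw [Nat.cast_succ] at hdet ⊢
    rw [mul_assoc, ← hα n hn, nonsing_inv_mul_cancel_left _ _ hdet]
  have hβ' : ∀ n, 1 ≤ n → β (n + 1) = Wm2⁻¹ * β n * (Wm1 + (n : ℂ) • 1) := by
    intro n hn
    rw [mul_assoc, hβ n hn, nonsing_inv_mul_cancel_left _ _ ((isUnit_iff_isUnit_det _).mp hWm2)]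
  refine ⟨fun n hn => ?_, fun n hn => ?_⟩
  · obtain ⟨m, rfl⟩ := Nat.exists_eq_add_of_le' hn
    -- in the statement `k` runs over `List.range (n-1)` coerced to a `List ℂ` (a monadic map)
    simp only [Nat.add_sub_cancel, bind_pure_comp, List.map_eq_map, List.map_map]
    rw [eq_prod_map_range_mul_mul_pow_of_succ (c := fun n => (Wm1 + (n : ℂ) • 1)⁻¹) hα' m,
      eq_pow_mul_mul_prod_map_range_of_succ (d := fun n => Wm1 + (n : ℂ) • 1) hβ' m]
    refine ⟨?_, ?_⟩
    · congr 3
      refine List.map_congr_left fun k hk => ?_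
      rw [Function.comp_apply, Nat.cast_sub (by rw [List.mem_range] at hk; omega)]
    · simp only [Function.comp_def, Nat.cast_succ]
  · obtain ⟨m, rfl⟩ := Nat.exists_eq_add_of_le' hn
    rw [show m + 2 - 1 = m + 1 by omega]
    exact ⟨neg_add_commutator_eq_of_shift (hα (m + 1) (by omega)) (hβ (m + 1) (by omega)),
      mul_eq_neg_add_of_shift (hα (m + 1) (by omega)) (hβ (m + 1) (by omega))⟩

/-- explicit solution of the linear reduction (`W₀ = 0`) of the
non-Fuchsian matrix discrete Painlevé II system, and verification that the remaining
equations of the system hold identically. -/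
theorem statement16 {N : ℕ} (hN : 1 ≤ N)
    (Wm2 Wm1 : Matrix (Fin N) (Fin N) ℂ)
    (hWm2 : IsUnit Wm2)
    (hWm1 : ∀ n : ℕ, 1 ≤ n → IsUnit (Wm1 + (n : ℂ) • 1))
    (α β : ℕ → Matrix (Fin N) (Fin N) ℂ)
    (hα : ∀ n : ℕ, 1 ≤ n → (Wm1 + ((n : ℂ) + 1) • 1) * α (n+1) = α n * Wm2)
    (hβ : ∀ n : ℕ, 1 ≤ n → β n * (Wm1 + (n : ℂ) • 1) = Wm2 * β (n+1)) :
    (∀ n : ℕ, 1 ≤ n →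
      α n = ((List.range (n-1)).map fun k => (Wm1 + ((n : ℂ) - (k : ℂ)) • 1)⁻¹).prod *
          α 1 * Wm2 ^ (n-1) ∧
      β n = Wm2⁻¹ ^ (n-1) * β 1 *
          ((List.range (n-1)).map fun k => Wm1 + ((k : ℂ) + 1) • 1).prod) ∧
    (∀ n : ℕ, 2 ≤ n →
      -(α n * β (n-1)) + ((α n * β (n-1)) * Wm1 - Wm1 * (α n * β (n-1))) =
        α n * Wm2 * β n - α (n-1) * Wm2 * β (n-1) ∧
      β (n-1) * α n = -(Wm2 * β n * α n) + β (n-1) * α (n-1) * Wm2) :=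
  statement16_general Wm2 Wm1 hWm2 hWm1 α β hα hβ
end
end

section
/- Let A, C ∈ ℂ^{N×N} and set B := A·C − C·A. Assume B commutes with A and with C (so A, C, B span a Heisenberg algebra). Then for every z ∈ ℂ with z ≠ 0, the matrix w(z) := exp(−A·z^{−1} + C·z) is invertible, the map z ↦ w(z) is differentiable, and its right logarithmic derivative is the Laurent polynomial w′(z)·w(z)^{−1} = A·z^{−2} − B·z^{−1} + C; that is, w′(z)·w(z)^{−1} = W_{−2}z^{−2} + W_{−1}z^{−1} + W_0 with W_{−2} = A, W_0 = C, and W_{−1} = [W_0, W_{−2}] = C·A − A·C. -/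
/-!
If `b = a * c - c * a` commutes with `a` and `c`, then conjugation by `exp (t • a)` shifts `c` by
`t • b`, and the Baker–Campbell–Hausdorff series stops after the commutator term:
`exp (x + y) = exp x * exp y * exp (-½ [x, y])`. Both identities follow from uniqueness for the
linear ODE `f' = x * f`. Splitting `w s = exp (-s⁻¹ • a) * exp (s • c) * exp (½ • b)`, the product
rule gives `w' = (s⁻² • a + exp (-s⁻¹ • a) * c * exp (s⁻¹ • a)) * w`, and the conjugation formula
turns the middle term into `c - s⁻¹ • b`.
-/

namespace NormedSpace

variable {𝕂 𝔸 : Type*} [RCLike 𝕂] [NormedRing 𝔸] [NormedAlgebra 𝕂 𝔸] [CompleteSpace 𝔸]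

theorem eq_exp_smul_mul_of_hasDerivAt {f : 𝕂 → 𝔸} {x : 𝔸}
    (hf : ∀ t, HasDerivAt f (x * f t) t) (t : 𝕂) : f t = exp (t • x) * f 0 := by
  let : NormedAlgebra ℚ 𝔸 := .restrictScalars ℚ 𝕂 𝔸
  have hg : ∀ u, HasDerivAt (fun u => exp (u • -x) * f u) 0 u := by
    intro u
    have hcomm : x * exp (u • -x) = exp (u • -x) * x :=
      ((Commute.refl x).neg_right.smul_right u).exp_right.eq
    refine ((hasDerivAt_exp_smul_const' (-x) u).mul (hf u)).congr_deriv ?_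
    rw [neg_mul, hcomm, neg_mul, mul_assoc, neg_add_cancel]
  have hconst := is_const_of_deriv_eq_zero (fun u => (hg u).differentiableAt)
    (fun u => (hg u).deriv) t 0
  simp only [zero_smul, exp_zero, one_mul] at hconst
  rw [← hconst, ← mul_assoc, smul_neg,
    ← exp_add_of_commute ((Commute.refl (t • x)).neg_right), add_neg_cancel, exp_zero, one_mul]

theorem exp_smul_mul_of_commute_commutator {x y : 𝔸} (hx : Commute x (x * y - y * x)) (t : 𝕂) :
    exp (t • x) * y = (y + t • (x * y - y * x)) * exp (t • x) := by
  have hf : ∀ u : 𝕂, HasDerivAt (fun u => (y + u • (x * y - y * x)) * exp (u • x))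
      (x * ((y + u • (x * y - y * x)) * exp (u • x))) u := by
    intro u
    have hlin : HasDerivAt (fun u : 𝕂 => y + u • (x * y - y * x)) (x * y - y * x) u := by
      simpa using ((hasDerivAt_id u).smul_const (x * y - y * x)).const_add y
    refine (hlin.mul (hasDerivAt_exp_smul_const' x u)).congr_deriv ?_
    rw [← mul_assoc, ← mul_assoc, ← add_mul]
    congr 1
    rw [mul_add, add_mul, mul_smul_comm, smul_mul_assoc, hx.eq]
    abel
  simpa using (eq_exp_smul_mul_of_hasDerivAt hf t).symm

theorem exp_add_of_commute_commutator {x y : 𝔸} (hx : Commute x (x * y - y * x))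
    (hy : Commute y (x * y - y * x)) :
    exp (x + y) = exp x * exp y * exp ((-2⁻¹ : 𝕂) • (x * y - y * x)) := by
  have hconj := exp_smul_mul_of_commute_commutator (𝕂 := 𝕂) hx
  generalize x * y - y * x = b at hx hy hconj ⊢
  have hf : ∀ t : 𝕂, HasDerivAt (fun t => exp (t • x) * exp (t • y) * exp ((-(t ^ 2 / 2)) • b))
      ((x + y) * (exp (t • x) * exp (t • y) * exp ((-(t ^ 2 / 2)) • b))) t := by
    intro t
    have hquad : HasDerivAt (fun t : 𝕂 => -(t ^ 2 / 2)) (-t) t := by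
      refine ((hasDerivAt_pow 2 t).div_const 2).fun_neg.congr_deriv ?_
      push_cast; ring
    have hb := (hasDerivAt_exp_smul_const' b (-(t ^ 2 / 2))).scomp t hquad
    refine (((hasDerivAt_exp_smul_const' x t).mul (hasDerivAt_exp_smul_const' y t)).mul
      hb).congr_deriv ?_
    have hbx : b * exp (t • x) = exp (t • x) * b := ((hx.symm.smul_right t).exp_right).eq
    have hby : b * exp (t • y) = exp (t • y) * b := ((hy.symm.smul_right t).exp_right).eq
    have hbxy : exp (t • x) * exp (t • y) * b = b * exp (t • x) * exp (t • y) := by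
      rw [mul_assoc, ← hby, ← mul_assoc, ← hbx]
    simp only [Pi.mul_apply, add_mul, ← mul_assoc, hconj t,
      mul_smul_comm, hbxy, smul_mul_assoc, Function.comp_apply]
    module
  simpa using (eq_exp_smul_mul_of_hasDerivAt hf 1).symm

theorem exp_neg_inv_smul_add_smul {a c : 𝔸} (ha : Commute a (a * c - c * a))
    (hc : Commute c (a * c - c * a)) {s : 𝕂} (hs : s ≠ 0) :
    exp (-(s⁻¹ • a) + s • c) =
      exp (-s⁻¹ • a) * exp (s • c) * exp ((2⁻¹ : 𝕂) • (a * c - c * a)) := by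
  have hcomm : -(s⁻¹ • a) * (s • c) - (s • c) * -(s⁻¹ • a) = -(a * c - c * a) := by
    simp only [neg_mul, mul_neg, smul_mul_smul, inv_mul_cancel₀ hs, mul_inv_cancel₀ hs, one_smul]
    abel
  have h := exp_add_of_commute_commutator (𝕂 := 𝕂) (x := -(s⁻¹ • a)) (y := s • c)
    (by rw [hcomm]; exact (ha.smul_left _).neg_left.neg_right)
    (by rw [hcomm]; exact (hc.smul_left _).neg_right)
  rw [hcomm, smul_neg, neg_smul, neg_neg] at h
  rw [h, neg_smul]

theorem hasDerivAt_exp_neg_inv_smul_add_smul {a c : 𝔸} (ha : Commute a (a * c - c * a))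
    (hc : Commute c (a * c - c * a)) {z : 𝕂} (hz : z ≠ 0) :
    HasDerivAt (fun s : 𝕂 => exp (-(s⁻¹ • a) + s • c))
      ((z⁻¹ ^ 2 • a - z⁻¹ • (a * c - c * a) + c) * exp (-(z⁻¹ • a) + z • c)) z := by
  have hinv : HasDerivAt (fun s : 𝕂 => -s⁻¹) (z⁻¹ ^ 2) z := by
    simpa using (hasDerivAt_inv hz).fun_neg
  have hprod := (((hasDerivAt_exp_smul_const' a (-z⁻¹)).scomp z hinv).mul
    (hasDerivAt_exp_smul_const' c z)).mul_const (exp ((2⁻¹ : 𝕂) • (a * c - c * a)))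
  refine (hprod.congr_of_eventuallyEq ?_).congr_deriv ?_
  · filter_upwards [eventually_ne_nhds hz] with s hs
    exact exp_neg_inv_smul_add_smul ha hc hs
  · rw [exp_neg_inv_smul_add_smul ha hc hz]
    simp only [Function.comp_apply, add_mul, sub_mul, smul_mul_assoc, ← mul_assoc,
      exp_smul_mul_of_commute_commutator ha]
    module

end NormedSpace

theorem statement17_general {N : ℕ} (A C : Matrix (Fin N) (Fin N) ℂ)
    (hAB : A * (A * C - C * A) = (A * C - C * A) * A)
    (hCB : C * (A * C - C * A) = (A * C - C * A) * C) :
    ∀ z : ℂ, z ≠ 0 →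
      IsUnit (NormedSpace.exp (-(z⁻¹ • A) + z • C)) ∧
      ∀ i j, HasDerivAt
        (fun s : ℂ => NormedSpace.exp (-(s⁻¹ • A) + s • C) i j)
        (((z⁻¹ ^ 2 • A - z⁻¹ • (A * C - C * A) + C) *
            NormedSpace.exp (-(z⁻¹ • A) + z • C)) i j) z := by
  intro z hz
  refine ⟨Matrix.isUnit_exp _, fun i j => ?_⟩
  open scoped Matrix.Norms.Operator in
  exact (Matrix.entryLinearMap ℂ ℂ i j).toContinuousLinearMap.hasFDerivAt.comp_hasDerivAt z
    (NormedSpace.hasDerivAt_exp_neg_inv_smul_add_smul hAB hCB hz)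

/-- the Freud-type matrix of weights `w(z) = exp(-A z⁻¹ + C z)` built from
a Heisenberg triple has right logarithmic derivative `A z⁻² - B z⁻¹ + C`. -/
theorem statement17 {N : ℕ} (hN : 1 ≤ N) (A C : Matrix (Fin N) (Fin N) ℂ)
    (hAB : A * (A * C - C * A) = (A * C - C * A) * A)
    (hCB : C * (A * C - C * A) = (A * C - C * A) * C) :
    ∀ z : ℂ, z ≠ 0 →
      IsUnit (NormedSpace.exp (-(z⁻¹ • A) + z • C)) ∧
      ∀ i j, HasDerivAt
        (fun s : ℂ => NormedSpace.exp (-(s⁻¹ • A) + s • C) i j)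
        (((z⁻¹ ^ 2 • A - z⁻¹ • (A * C - C * A) + C) *
            NormedSpace.exp (-(z⁻¹ • A) + z • C)) i j) z :=
  statement17_general A C hAB hCB
end
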